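/- arXiv:1612.01364 — 5 statements merged into one kernel-verified Lean document; each statement's English description precedes it below -/
import Mathlib

section
/- Let X and Y be Banach spaces and let f: X → Y be a coarse Lipschitz equivalence. Then there exist A₀ > 0 and K ≥ 1 such that for every A ≥ A₀ and every maximal A-separated subset 𝓜 of X, the image 𝓝 = f(𝓜) is a net in Y and (1/K)·‖x−x'‖ ≤ ‖f(x)−f(x')‖ ≤ K·‖x−x'‖ for all x, x' ∈ 𝓜. -/
/-!
A coarse Lipschitz map on a normed space obeys an affine bound `d(f x, f y) ≤ L d(x, y) + B` at
every scale: pairs that are too close are compared through a point pushed out along the line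
through them. On an `A`-separated set with `A` large compared with the additive constants of `f`,
of its coarse inverse `g` and of `g ∘ f ≈ id`, those constants are absorbed into the
multiplicative ones, which gives the two-sided Lipschitz bounds. Maximality makes `𝓜` an `A`-net,
so every `y` lies within `C + L A + B` of `f m` for an `m ∈ 𝓜` close to `g y`.
-/

open Metric Filter Topology Pointwise
open scoped ENNReal NNReal

noncomputable section

section Defs

variable {M N : Type*} [PseudoMetricSpace M] [PseudoMetricSpace N]

/-- `Lip_s(f) = sup { dist (f x) (f y) / dist x y : dist x y ≥ s }`, valued in `ℝ≥0∞`. -/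
def lipS (f : M → N) (s : ℝ) : ℝ≥0∞ :=
  ⨆ (x : M) (y : M) (_ : s ≤ dist x y), ENNReal.ofReal (dist (f x) (f y) / dist x y)

/-- `Lip_∞(f) = inf_{s > 0} Lip_s(f)`. -/
def lipInfty (f : M → N) : ℝ≥0∞ := ⨅ (s : ℝ) (_ : 0 < s), lipS f s

/-- A map is coarse Lipschitz when `Lip_∞(f) < ∞`. -/
def CoarseLipschitz (f : M → N) : Prop := lipInfty f < ⊤

/-- Coarse Lipschitz equivalence. -/
def IsCLEquiv (f : M → N) : Prop :=
  CoarseLipschitz f ∧ ∃ g : N → M, CoarseLipschitz g ∧ ∃ C : ℝ, 0 ≤ C ∧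
    (∀ x, dist (g (f x)) x ≤ C) ∧ (∀ y, dist (f (g y)) y ≤ C)

/-- An `(a,b)`-net for some `0 < a ≤ b`. -/
def IsNet (s : Set M) : Prop :=
  ∃ a b : ℝ, 0 < a ∧ a ≤ b ∧ (∀ z ∈ s, ∀ z' ∈ s, z ≠ z' → a ≤ dist z z') ∧
    ∀ x : M, Metric.infDist x s < b

/-- `A`-separated subset. -/
def IsSep (A : ℝ) (s : Set M) : Prop := ∀ x ∈ s, ∀ x' ∈ s, x ≠ x' → A ≤ dist x x'

/-- Maximal `A`-separated subset. -/
def IsMaxSep (A : ℝ) (s : Set M) : Prop :=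
  IsSep A s ∧ ∀ t : Set M, s ⊆ t → IsSep A t → t = s

end Defs

section CoarseLipschitz

variable {M N : Type*} [PseudoMetricSpace M] [PseudoMetricSpace N]

theorem CoarseLipschitz.exists_dist_le_mul_of_le_dist {f : M → N} (hf : CoarseLipschitz f) :
    ∃ s L : ℝ, 0 < s ∧ 0 ≤ L ∧ ∀ x y : M, s ≤ dist x y → dist (f x) (f y) ≤ L * dist x y := by
  obtain ⟨s, hs, hfin⟩ : ∃ s : ℝ, 0 < s ∧ lipS f s < ⊤ := by
    simpa only [CoarseLipschitz, lipInfty, iInf_lt_iff, exists_prop] using hf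
  refine ⟨s, (lipS f s).toReal, hs, ENNReal.toReal_nonneg, fun x y hxy => ?_⟩
  have hquot : ENNReal.ofReal (dist (f x) (f y) / dist x y) ≤ lipS f s :=
    le_iSup_of_le x (le_iSup_of_le y (le_iSup_of_le hxy le_rfl))
  rw [← div_le_iff₀ (hs.trans_le hxy)]
  exact (ENNReal.ofReal_le_iff_le_toReal hfin.ne).1 hquot

end CoarseLipschitz

/-- At small distances, compare with a point `w` on the line through `x` and `y` at distance
`s` from `x` on the far side from `y`: both `(x, w)` and `(w, y)` are then `s`-apart. -/
theorem dist_le_mul_add_of_forall_le_dist {E N : Type*} [NormedAddCommGroup E] [NormedSpace ℝ E]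
    [PseudoMetricSpace N] {f : E → N} {s L : ℝ} (hs : 0 ≤ s) (hL : 0 ≤ L)
    (h : ∀ x y : E, s ≤ dist x y → dist (f x) (f y) ≤ L * dist x y) (x y : E) :
    dist (f x) (f y) ≤ L * dist x y + 2 * L * s := by
  rcases le_or_gt s (dist x y) with hle | -
  · nlinarith [h x y hle, mul_nonneg hL hs]
  obtain rfl | hxy := eq_or_ne x y
  · simpa using mul_nonneg (mul_nonneg zero_le_two hL) hs
  have hd : 0 < ‖x - y‖ := norm_pos_iff.2 (sub_ne_zero.2 hxy)
  set w := x + (s / ‖x - y‖) • (x - y)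
  have hxw : dist x w = s := by
    rw [dist_eq_norm, show x - w = -((s / ‖x - y‖) • (x - y)) by simp [w], norm_neg, norm_smul,
      Real.norm_of_nonneg (by positivity), div_mul_cancel₀ _ hd.ne']
  have hwy : dist w y = dist x y + s := by
    rw [dist_eq_norm, dist_eq_norm, show w - y = (1 + s / ‖x - y‖) • (x - y) by
      simp only [w, add_smul, one_smul]; abel, norm_smul, Real.norm_of_nonneg (by positivity),
      add_mul, one_mul, div_mul_cancel₀ _ hd.ne']
  calc dist (f x) (f y) ≤ dist (f x) (f w) + dist (f w) (f y) := dist_triangle _ _ _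
    _ ≤ L * dist x w + L * dist w y :=
        add_le_add (h x w hxw.ge) (h w y (by rw [hwy]; linarith [dist_nonneg (x := x) (y := y)]))
    _ = L * dist x y + 2 * L * s := by rw [hxw, hwy]; ring

theorem CoarseLipschitz.exists_dist_le_mul_add {E N : Type*} [NormedAddCommGroup E]
    [NormedSpace ℝ E] [PseudoMetricSpace N] {f : E → N} (hf : CoarseLipschitz f) :
    ∃ L B : ℝ, 0 ≤ L ∧ 0 ≤ B ∧ ∀ x y : E, dist (f x) (f y) ≤ L * dist x y + B := by
  obtain ⟨s, L, hs, hL, h⟩ := hf.exists_dist_le_mul_of_le_dist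
  exact ⟨L, 2 * L * s, hL, by positivity, dist_le_mul_add_of_forall_le_dist hs.le hL h⟩

section Nets

variable {M N : Type*} [PseudoMetricSpace M] [PseudoMetricSpace N] {A : ℝ} {𝓜 : Set M}

theorem IsMaxSep.exists_dist_lt (hA : 0 < A) (h𝓜 : IsMaxSep A 𝓜) (x : M) :
    ∃ m ∈ 𝓜, dist x m < A := by
  by_contra! hfar
  have hx : x ∉ 𝓜 := fun hx => (hfar x hx).not_gt (by rwa [dist_self])
  have hsep : IsSep A (insert x 𝓜) := by
    rintro z (rfl | hz) z' (rfl | hz') hne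
    · exact absurd rfl hne
    · exact hfar z' hz'
    · exact dist_comm z z' ▸ hfar z hz
    · exact h𝓜.1 z hz z' hz' hne
  exact hx (h𝓜.2 _ (Set.subset_insert x 𝓜) hsep ▸ Set.mem_insert x 𝓜)

theorem dist_le_two_mul_dist_of_coarse_left_inverse {f : M → N} {g : N → M} {L B C : ℝ}
    (hg : ∀ u v : N, dist (g u) (g v) ≤ L * dist u v + B) (hgf : ∀ x, dist (g (f x)) x ≤ C)
    {x x' : M} (hxx' : 2 * (2 * C + B) ≤ dist x x') :
    dist x x' ≤ 2 * L * dist (f x) (f x') := by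
  have := calc dist x x' ≤ dist x (g (f x)) + dist (g (f x)) (g (f x')) + dist (g (f x')) x' :=
        dist_triangle4 _ _ _ _
    _ ≤ C + (L * dist (f x) (f x') + B) + C := by
        gcongr
        exacts [dist_comm x _ ▸ hgf x, hg _ _, hgf x']
  linarith

theorem IsMaxSep.isNet_image {f : M → N} {g : N → M} {K L B C : ℝ} (hA : 0 < A) (hK : 0 < K)
    (hL : 0 ≤ L) (h𝓜 : IsMaxSep A 𝓜) (hf : ∀ x y, dist (f x) (f y) ≤ L * dist x y + B)
    (hfg : ∀ y, dist (f (g y)) y ≤ C)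
    (hsep : ∀ x ∈ 𝓜, ∀ x' ∈ 𝓜, x ≠ x' → dist x x' ≤ K * dist (f x) (f x')) :
    IsNet (f '' 𝓜) := by
  refine ⟨A / K, max (A / K) (C + L * A + B + 1), by positivity, le_max_left _ _, ?_, fun y => ?_⟩
  · rintro _ ⟨x, hx, rfl⟩ _ ⟨x', hx', rfl⟩ hne
    have hxx' : x ≠ x' := fun h => hne (h ▸ rfl)
    rw [div_le_iff₀' hK]
    exact (h𝓜.1 x hx x' hx' hxx').trans (hsep x hx x' hx' hxx')
  obtain ⟨m, hm, hdm⟩ := h𝓜.exists_dist_lt hA (g y)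
  calc infDist y (f '' 𝓜) ≤ dist y (f m) := infDist_le_dist_of_mem (Set.mem_image_of_mem f hm)
    _ ≤ dist (f (g y)) y + dist (f (g y)) (f m) := dist_triangle_left _ _ _
    _ ≤ C + (L * A + B) := by
        gcongr
        exacts [hfg y, (hf _ _).trans (by gcongr)]
    _ < max (A / K) (C + L * A + B + 1) := lt_max_of_lt_right (by linarith)

end Nets

theorem stmt1_general {X Y : Type*} [NormedAddCommGroup X] [NormedSpace ℝ X]
    [NormedAddCommGroup Y] [NormedSpace ℝ Y]
    (f : X → Y) (hf : IsCLEquiv f) :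
    ∃ A₀ K : ℝ, 0 < A₀ ∧ 1 ≤ K ∧ ∀ A : ℝ, A₀ ≤ A → ∀ 𝓜 : Set X, IsMaxSep A 𝓜 →
      IsNet (f '' 𝓜) ∧ ∀ x ∈ 𝓜, ∀ x' ∈ 𝓜,
        (1 / K) * ‖x - x'‖ ≤ ‖f x - f x'‖ ∧ ‖f x - f x'‖ ≤ K * ‖x - x'‖ := by
  obtain ⟨hfc, g, hgc, C, hC, hgf, hfg⟩ := hf
  obtain ⟨L, B, hL, hB, hfL⟩ := hfc.exists_dist_le_mul_add
  obtain ⟨L', B', -, hB', hgL⟩ := hgc.exists_dist_le_mul_add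
  set K := max (L + 1) (2 * L')
  have hK : 1 ≤ K := le_max_of_le_left (by linarith)
  refine ⟨max B (2 * (2 * C + B')) + 1, K, by positivity, hK, fun A hA 𝓜 h𝓜 => ?_⟩
  have hBA : B + 1 ≤ A := by linarith [le_max_left B (2 * (2 * C + B'))]
  have hCA : 2 * (2 * C + B') ≤ A := by linarith [le_max_right B (2 * (2 * C + B'))]
  have lower : ∀ x ∈ 𝓜, ∀ x' ∈ 𝓜, x ≠ x' → dist x x' ≤ K * dist (f x) (f x') :=
    fun x hx x' hx' hne => (dist_le_two_mul_dist_of_coarse_left_inverse hgL hgf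
      (hCA.trans (h𝓜.1 x hx x' hx' hne))).trans (by gcongr; exact le_max_right _ _)
  have upper : ∀ x ∈ 𝓜, ∀ x' ∈ 𝓜, dist (f x) (f x') ≤ K * dist x x' := by
    intro x hx x' hx'
    obtain rfl | hne := eq_or_ne x x'
    · simp
    calc dist (f x) (f x') ≤ L * dist x x' + B := hfL x x'
      _ ≤ (L + 1) * dist x x' := by linarith [h𝓜.1 x hx x' hx' hne]
      _ ≤ K * dist x x' := by gcongr; exact le_max_left _ _
  refine ⟨h𝓜.isNet_image (by linarith) (by positivity) hL hfL hfg lower,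
    fun x hx x' hx' => ?_⟩
  rw [← dist_eq_norm, ← dist_eq_norm, one_div_mul_eq_div, div_le_iff₀' (by positivity)]
  refine ⟨?_, upper x hx x' hx'⟩
  obtain rfl | hne := eq_or_ne x x'
  · simp
  exact lower x hx x' hx' hne

/-- a coarse Lipschitz equivalence maps maximal `A`-separated sets
(for `A` large enough) onto nets, bi-Lipschitzly. -/
theorem stmt1 {X Y : Type*} [NormedAddCommGroup X] [NormedSpace ℝ X] [CompleteSpace X]
    [NormedAddCommGroup Y] [NormedSpace ℝ Y] [CompleteSpace Y]
    (f : X → Y) (hf : IsCLEquiv f) :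
    ∃ A₀ K : ℝ, 0 < A₀ ∧ 1 ≤ K ∧ ∀ A : ℝ, A₀ ≤ A → ∀ 𝓜 : Set X, IsMaxSep A 𝓜 →
      IsNet (f '' 𝓜) ∧ ∀ x ∈ 𝓜, ∀ x' ∈ 𝓜,
        (1 / K) * ‖x - x'‖ ≤ ‖f x - f x'‖ ∧ ‖f x - f x'‖ ≤ K * ‖x - x'‖ :=
  stmt1_general f hf
end
end

section
/- Let X and Y be Banach spaces and let 𝓜 be a net in X such that every Lipschitz map from 𝓜 to Y admits a Lipschitz extension from X to Y. Then there exists λ ≥ 1 such that every Lipschitz map f: 𝓜 → Y admits a Lipschitz extension g: X → Y with Lip(g) ≤ λ·Lip(f). -/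
open Metric Filter Topology Pointwise
open scoped ENNReal NNReal

noncomputable section

/-!
Realize the Banach space `Lip₀(P, Y)` of Lipschitz maps vanishing at a base point `p₀` as the
closed subspace of `ℓ^∞(P × P, Y)` formed by the tables of difference quotients (the diagonal
entries are forced to be `0⁻¹ • 0 = 0`, so a table is determined by the map it encodes). For
`s ⊆ P`, restriction `Lip₀(P, Y) → Lip₀(s, Y)` is then a bounded linear map between Banach
spaces, and the extension hypothesis says exactly that it is surjective. The open mapping theorem
provides preimages of norm at most `C` times the norm, i.e. extensions with Lipschitz constant
at most `C · Lip(f)`.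
-/

section LipZero

variable {P Y : Type*} [MetricSpace P] [NormedAddCommGroup Y] [NormedSpace ℝ Y]

variable (P Y) in
def diffQuot : (P → Y) →ₗ[ℝ] P × P → Y where
  toFun F p := (dist p.1 p.2)⁻¹ • (F p.1 - F p.2)
  map_add' F G := by funext p; simp only [Pi.add_apply]; module
  map_smul' c F := by funext p; simp only [Pi.smul_apply, RingHom.id_apply]; module

variable (Y) in
def ofDiffQuot (p₀ : P) : (P × P → Y) →ₗ[ℝ] P → Y where
  toFun w z := dist z p₀ • w (z, p₀)
  map_add' v w := by funext z; simp only [Pi.add_apply, smul_add]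
  map_smul' c w := by funext z; simp only [Pi.smul_apply, RingHom.id_apply]; module

theorem diffQuot_apply (F : P → Y) (p : P × P) :
    diffQuot P Y F p = (dist p.1 p.2)⁻¹ • (F p.1 - F p.2) := rfl

theorem ofDiffQuot_apply (p₀ : P) (w : P × P → Y) (z : P) :
    ofDiffQuot Y p₀ w z = dist z p₀ • w (z, p₀) := rfl

theorem ofDiffQuot_self (p₀ : P) (w : P × P → Y) : ofDiffQuot Y p₀ w p₀ = 0 := by
  simp [ofDiffQuot_apply]

theorem ofDiffQuot_diffQuot {p₀ : P} {F : P → Y} (hF : F p₀ = 0) :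
    ofDiffQuot Y p₀ (diffQuot P Y F) = F := by
  funext z
  rcases eq_or_ne z p₀ with rfl | hz
  · rw [ofDiffQuot_self, hF]
  · simp [ofDiffQuot_apply, diffQuot_apply, hF, smul_smul, dist_ne_zero.2 hz]

theorem norm_diffQuot_le_iff {F : P → Y} {p : P × P} (hp : p.1 ≠ p.2) {K : ℝ} :
    ‖diffQuot P Y F p‖ ≤ K ↔ dist (F p.1) (F p.2) ≤ K * dist p.1 p.2 := by
  have hd : 0 < dist p.1 p.2 := dist_pos.2 hp
  rw [diffQuot_apply, norm_smul, norm_inv, Real.norm_of_nonneg hd.le, ← dist_eq_norm,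
    inv_mul_le_iff₀ hd, mul_comm]

theorem lipschitzWith_iff_norm_diffQuot_le {K : ℝ≥0} {F : P → Y} :
    LipschitzWith K F ↔ ∀ p, ‖diffQuot P Y F p‖ ≤ K := by
  refine ⟨fun hF p => ?_, fun hF => LipschitzWith.of_dist_le_mul fun z z' => ?_⟩
  · rcases eq_or_ne p.1 p.2 with h | h
    · simp [diffQuot_apply, h]
    · exact (norm_diffQuot_le_iff h).2 (hF.dist_le_mul _ _)
  · rcases eq_or_ne z z' with rfl | h
    · simp
    · exact (norm_diffQuot_le_iff (p := (z, z')) h).1 (hF _)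

variable (Y) in
def lipZero (p₀ : P) : Submodule ℝ (lp (fun _ : P × P => Y) ∞) where
  carrier := {w | ⇑w = diffQuot P Y (ofDiffQuot Y p₀ w)}
  add_mem' {v w} hv hw := by
    simp only [Set.mem_ofPred_eq, lp.coeFn_add, map_add]
    rw [← hv, ← hw]
  zero_mem' := by
    simp only [Set.mem_ofPred_eq, lp.coeFn_zero]
    rw [map_zero, map_zero]
  smul_mem' c w hw := by
    simp only [Set.mem_ofPred_eq, lp.coeFn_smul, map_smul]
    rw [← hw]

theorem isClosed_lipZero (p₀ : P) :
    IsClosed (lipZero Y p₀ : Set (lp (fun _ : P × P => Y) ∞)) := by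
  have hcoe := lp.uniformContinuous_coe (E := fun _ : P × P => Y) (p := ∞) |>.continuous
  have heval (q : P × P) : Continuous fun w : lp (fun _ : P × P => Y) ∞ => w q :=
    (continuous_apply q).comp hcoe
  refine isClosed_eq hcoe (continuous_pi fun p => ?_)
  exact (((heval _).const_smul _).sub ((heval _).const_smul _)).const_smul _

variable {p₀ : P}

theorem lipschitzWith_ofDiffQuot_of_mem_lipZero {w : lp (fun _ : P × P => Y) ∞}
    (hw : w ∈ lipZero Y p₀) : LipschitzWith ‖w‖₊ (ofDiffQuot Y p₀ w) :=
  lipschitzWith_iff_norm_diffQuot_le.2 fun p => by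
    rw [coe_nnnorm, ← congrFun hw p]
    exact lp.norm_apply_le_norm ENNReal.top_ne_zero w p

theorem eq_of_ofDiffQuot_eq {v w : lp (fun _ : P × P => Y) ∞} (hv : v ∈ lipZero Y p₀)
    (hw : w ∈ lipZero Y p₀) (h : ofDiffQuot Y p₀ v = ofDiffQuot Y p₀ w) : v = w :=
  lp.ext <| (hv : ⇑v = _).trans <| h ▸ (hw : ⇑w = _).symm

theorem LipschitzWith.exists_mem_lipZero {K : ℝ≥0} {F : P → Y} (hF : LipschitzWith K F)
    (hF₀ : F p₀ = 0) :
    ∃ w ∈ lipZero Y p₀, ofDiffQuot Y p₀ w = F ∧ ‖w‖ ≤ K := by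
  have hbound := lipschitzWith_iff_norm_diffQuot_le.1 hF
  have hmem : Memℓp (diffQuot P Y F) ∞ :=
    memℓp_infty ⟨K, by rintro _ ⟨p, rfl⟩; exact hbound p⟩
  refine ⟨⟨_, hmem⟩, ?_, ofDiffQuot_diffQuot hF₀,
    lp.norm_le_of_forall_le K.coe_nonneg hbound⟩
  show diffQuot P Y F = diffQuot P Y (ofDiffQuot Y p₀ (diffQuot P Y F))
  rw [ofDiffQuot_diffQuot hF₀]

instance [CompleteSpace Y] (p₀ : P) : CompleteSpace (lipZero Y p₀) :=
  (isClosed_lipZero p₀).completeSpace_coe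

variable (Y) in
def restrictLipZero (s : Set P) (p₀ : s) : lipZero Y (p₀ : P) →L[ℝ] lipZero Y p₀ :=
  LinearMap.mkContinuous
    { toFun w := ⟨⟨fun q => (w : lp (fun _ : P × P => Y) ∞) (q.1, q.2),
          memℓp_infty ⟨‖w‖, by
            rintro _ ⟨q, rfl⟩; exact lp.norm_apply_le_norm ENNReal.top_ne_zero _ _⟩⟩,
        funext fun q => congrFun w.2 (q.1, q.2)⟩
      map_add' _ _ := rfl
      map_smul' _ _ := rfl } 1
    fun w => by
      rw [one_mul]
      exact lp.norm_le_of_forall_le (norm_nonneg _) fun q =>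
        lp.norm_apply_le_norm ENNReal.top_ne_zero (w : lp (fun _ : P × P => Y) ∞) (q.1, q.2)

theorem ofDiffQuot_restrictLipZero {s : Set P} (p₀ : s) (w : lipZero Y (p₀ : P)) :
    ofDiffQuot Y p₀ (restrictLipZero Y s p₀ w : lp (fun _ : s × s => Y) ∞) =
      ofDiffQuot Y (p₀ : P) w ∘ (↑) :=
  rfl

theorem restrictLipZero_surjective {s : Set P} (p₀ : s)
    (hext : ∀ (f : s → Y) (K : ℝ≥0), LipschitzWith K f →
      ∃ (g : P → Y) (K' : ℝ≥0), LipschitzWith K' g ∧ ∀ m : s, g m = f m) :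
    Function.Surjective (restrictLipZero Y s p₀) := by
  rintro ⟨v, hv⟩
  obtain ⟨g, K', hg, hgv⟩ := hext _ _ (lipschitzWith_ofDiffQuot_of_mem_lipZero hv)
  have hg₀ : g p₀ = 0 := (hgv p₀).trans (ofDiffQuot_self _ _)
  obtain ⟨w, hw, hwg, -⟩ := hg.exists_mem_lipZero hg₀
  refine ⟨⟨w, hw⟩, Subtype.ext (eq_of_ofDiffQuot_eq (Submodule.coe_mem _) hv ?_)⟩
  rw [ofDiffQuot_restrictLipZero, hwg]
  exact funext hgv

end LipZero

theorem exists_lipschitz_extension_with_uniform_constant {P Y : Type*} [MetricSpace P]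
    [NormedAddCommGroup Y] [NormedSpace ℝ Y] [CompleteSpace Y] (s : Set P)
    (hext : ∀ (f : s → Y) (K : ℝ≥0), LipschitzWith K f →
      ∃ (g : P → Y) (K' : ℝ≥0), LipschitzWith K' g ∧ ∀ m : s, g m = f m) :
    ∃ C : ℝ≥0, ∀ (f : s → Y) (K : ℝ≥0), LipschitzWith K f →
      ∃ g : P → Y, LipschitzWith (C * K) g ∧ ∀ m : s, g m = f m := by
  rcases isEmpty_or_nonempty s with hs | ⟨⟨p₀⟩⟩
  · exact ⟨0, fun f K _ => ⟨0, by simp, isEmptyElim⟩⟩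
  obtain ⟨C, -, hC⟩ :=
    (restrictLipZero Y s p₀).exists_preimage_norm_le (restrictLipZero_surjective p₀ hext)
  refine ⟨C.toNNReal, fun f K hf => ?_⟩
  have hf₀ : LipschitzWith K fun m => f m - f p₀ :=
    LipschitzWith.of_dist_le_mul fun m m' => by rw [dist_sub_right]; exact hf.dist_le_mul m m'
  obtain ⟨v, hv, hvf, hvK⟩ := hf₀.exists_mem_lipZero (sub_self _)
  obtain ⟨w, hwv, hwC⟩ := hC ⟨v, hv⟩
  have hw : ‖w‖₊ ≤ C.toNNReal * K := by
    rw [← NNReal.coe_le_coe, coe_nnnorm, NNReal.coe_mul, Real.coe_toNNReal']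
    exact hwC.trans (mul_le_mul (le_max_left _ _) hvK (norm_nonneg _) (le_max_right _ _))
  refine ⟨fun x => ofDiffQuot Y (p₀ : P) w x + f p₀, ?_, fun m => ?_⟩
  · refine LipschitzWith.of_dist_le_mul fun x y => ?_
    rw [dist_add_right]
    exact ((lipschitzWith_ofDiffQuot_of_mem_lipZero w.2).weaken hw).dist_le_mul x y
  · have hwf : ofDiffQuot Y (p₀ : P) w ∘ (↑) = fun m => f m - f p₀ := by
      rw [← ofDiffQuot_restrictLipZero, hwv, hvf]
    exact eq_sub_iff_add_eq.mp (congrFun hwf m)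

theorem stmt4_general {X Y : Type*} [NormedAddCommGroup X]
    [NormedAddCommGroup Y] [NormedSpace ℝ Y] [CompleteSpace Y]
    (𝓜 : Set X)
    (hext : ∀ (f : 𝓜 → Y) (K : ℝ≥0), LipschitzWith K f →
      ∃ (g : X → Y) (K' : ℝ≥0), LipschitzWith K' g ∧ ∀ m : 𝓜, g (m : X) = f m) :
    ∃ lam : ℝ≥0, 1 ≤ lam ∧ ∀ (f : 𝓜 → Y) (K : ℝ≥0), LipschitzWith K f →
      ∃ g : X → Y, LipschitzWith (lam * K) g ∧ ∀ m : 𝓜, g (m : X) = f m := by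
  obtain ⟨C, hC⟩ := exists_lipschitz_extension_with_uniform_constant 𝓜 hext
  refine ⟨max 1 C, le_max_left _ _, fun f K hf => ?_⟩
  obtain ⟨g, hg, hgf⟩ := hC f K hf
  exact ⟨g, hg.weaken (by gcongr; exact le_max_right _ _), hgf⟩

/-- uniformity of the Lipschitz constant of extensions from a net. -/
theorem stmt4 {X Y : Type*} [NormedAddCommGroup X] [NormedSpace ℝ X] [CompleteSpace X]
    [NormedAddCommGroup Y] [NormedSpace ℝ Y] [CompleteSpace Y]
    (𝓜 : Set X) (hnet : IsNet 𝓜)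
    (hext : ∀ (f : 𝓜 → Y) (K : ℝ≥0), LipschitzWith K f →
      ∃ (g : X → Y) (K' : ℝ≥0), LipschitzWith K' g ∧ ∀ m : 𝓜, g (m : X) = f m) :
    ∃ lam : ℝ≥0, 1 ≤ lam ∧ ∀ (f : 𝓜 → Y) (K : ℝ≥0), LipschitzWith K f →
      ∃ g : X → Y, LipschitzWith (lam * K) g ∧ ∀ m : 𝓜, g (m : X) = f m :=
  stmt4_general 𝓜 hext
end
end

section
/- Let X and Y be Banach spaces such that (X,Y) has the μ-Lipschitz representation property for some μ ≥ 1. Then for every sequence (f_n)_{n≥1} of coarse Lipschitz maps from X to Y with ∑_{n=1}^∞ Lip_∞(f_n) < ∞, there exists a coarse Lipschitz map g: X → Y such that Lip_∞(g − ∑_{n=1}^N f_n) → 0 as N → ∞. (This expresses that the quotient space CL(X,Y) of coarse Lipschitz maps modulo maps with Lip_∞ = 0, equipped with the norm induced by Lip_∞, is a Banach space.) -/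
/-!
Use the Lipschitz representation property to replace each `f n`, up to a bounded error, by a
Lipschitz map `g n` with `g n 0 = 0` and `Lip(g n) < μ (Lip_∞(f n) + 2⁻ⁿ)`. These constants
are summable, so `G = ∑ g n` converges pointwise, and `G - ∑_{n<N} f n` is the Lipschitz tail
`∑_{n≥N} g n` plus a bounded map. Bounded perturbations do not change `Lip_∞`, so
`Lip_∞(G - ∑_{n<N} f n)` is at most the tail `∑_{n≥N} Lip(g n)`, which tends to `0`.
-/

open Metric Filter Topology Pointwise
open scoped ENNReal NNReal

noncomputable section

/-- The pair `(X, Y)` has the `μ`-Lipschitz representation property. -/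
def muLRP (X Y : Type*) [NormedAddCommGroup X] [NormedSpace ℝ X]
    [NormedAddCommGroup Y] [NormedSpace ℝ Y] (μ : ℝ) : Prop :=
  ∀ f : X → Y, CoarseLipschitz f → ∀ c : ℝ, lipInfty f < ENNReal.ofReal c →
    ∃ (g : X → Y) (K : ℝ≥0), g 0 = 0 ∧ LipschitzWith K g ∧ (K : ℝ) < μ * c ∧
      ∃ B : ℝ, ∀ x : X, ‖f x - g x‖ ≤ B

section LipInfty

variable {M E : Type*} [PseudoMetricSpace M]

lemma lipInfty_le_of_dist_le [PseudoMetricSpace E] {f : M → E} {K : ℝ≥0} {C : ℝ}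
    (h : ∀ x y, dist (f x) (f y) ≤ K * dist x y + C) : lipInfty f ≤ K := by
  refine ENNReal.le_of_forall_pos_le_add fun ε hε _ => ?_
  have hε' : (0 : ℝ) < ε := hε
  set s : ℝ := (|C| + 1) / ε
  have hs : 0 < s := by positivity
  have hCs : C ≤ ε * s := by
    rw [mul_div_cancel₀ _ hε'.ne']
    linarith [le_abs_self C]
  refine (iInf₂_le s hs).trans <| iSup₂_le fun x y => iSup_le fun hxy => ?_
  have hxy' : 0 < dist x y := hs.trans_le hxy
  have hratio : dist (f x) (f y) / dist x y ≤ K + ε := by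
    have hεs : (ε : ℝ) * s ≤ ε * dist x y := mul_le_mul_of_nonneg_left hxy hε'.le
    rw [div_le_iff₀ hxy']
    linarith [h x y]
  calc ENNReal.ofReal (dist (f x) (f y) / dist x y) ≤ ENNReal.ofReal (K + ε) :=
        ENNReal.ofReal_le_ofReal hratio
    _ = K + ε := by
        rw [ENNReal.ofReal_add K.coe_nonneg ε.coe_nonneg, ENNReal.ofReal_coe_nnreal,
          ENNReal.ofReal_coe_nnreal]

lemma lipInfty_add_le_of_bounded [SeminormedAddCommGroup E] {h b : M → E} {K : ℝ≥0}
    (hh : LipschitzWith K h) {B : ℝ} (hB : ∀ x, ‖b x‖ ≤ B) :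
    lipInfty (fun x => h x + b x) ≤ K := by
  refine lipInfty_le_of_dist_le (C := 2 * B) fun x y => ?_
  calc dist (h x + b x) (h y + b y) ≤ dist (h x) (h y) + dist (b x) (b y) :=
        dist_add_add_le _ _ _ _
    _ ≤ K * dist x y + (‖b x‖ + ‖b y‖) :=
        add_le_add (hh.dist_le_mul x y) (dist_le_norm_add_norm _ _)
    _ ≤ K * dist x y + 2 * B := by linarith [hB x, hB y]

end LipInfty

section LipschitzSeries

variable {M E ι : Type*} [PseudoMetricSpace M] [NormedAddCommGroup E]
  {g : ι → M → E} {K : ι → ℝ≥0}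

lemma summable_apply_of_lipschitzWith [CompleteSpace E] (hg : ∀ i, LipschitzWith (K i) (g i))
    (hK : Summable K) {x₀ : M} (hg₀ : ∀ i, g i x₀ = 0) (x : M) : Summable fun i => g i x := by
  refine Summable.of_norm_bounded ((NNReal.summable_coe.2 hK).mul_right (dist x x₀)) fun i => ?_
  simpa [hg₀ i, dist_eq_norm] using (hg i).dist_le_mul x x₀

lemma LipschitzWith.tsum (hg : ∀ i, LipschitzWith (K i) (g i)) (hK : Summable K)
    (hsum : ∀ x, Summable fun i => g i x) :
    LipschitzWith (∑' i, K i) fun x => ∑' i, g i x := by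
  refine LipschitzWith.of_dist_le_mul fun x y => ?_
  rw [dist_eq_norm, ← (hsum x).tsum_sub (hsum y), NNReal.coe_tsum, ← tsum_mul_right]
  refine tsum_of_norm_bounded ((NNReal.summable_coe.2 hK).mul_right _).hasSum fun i => ?_
  rw [← dist_eq_norm]
  exact (hg i).dist_le_mul x y

end LipschitzSeries

section LipschitzRepresentation

variable {X Y : Type*} [NormedAddCommGroup X] [NormedAddCommGroup Y]

lemma lipInfty_tsum_sub_sum_le [CompleteSpace Y] {f g : ℕ → X → Y} {K : ℕ → ℝ≥0}
    (hg : ∀ n, LipschitzWith (K n) (g n)) (hK : Summable K) (hg₀ : ∀ n, g n 0 = 0)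
    (hfg : ∀ n, ∃ B : ℝ, ∀ x, ‖f n x - g n x‖ ≤ B) (N : ℕ) :
    lipInfty (fun x => ∑' n, g n x - ∑ n ∈ Finset.range N, f n x) ≤ ∑' n, K (n + N) := by
  choose B hB using hfg
  have hsum := summable_apply_of_lipschitzWith hg hK hg₀
  have htail : LipschitzWith (∑' n, K (n + N)) fun x => ∑' n, g (n + N) x :=
    LipschitzWith.tsum (fun n => hg (n + N)) ((NNReal.summable_nat_add_iff N).2 hK)
      fun x => (summable_nat_add_iff N).2 (hsum x)
  have hsplit : (fun x => ∑' n, g n x - ∑ n ∈ Finset.range N, f n x) =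
      fun x => (∑' n, g (n + N) x) + ∑ n ∈ Finset.range N, (g n x - f n x) := by
    funext x
    rw [← (hsum x).sum_add_tsum_nat_add N, Finset.sum_sub_distrib]
    abel
  rw [hsplit]
  refine lipInfty_add_le_of_bounded htail (B := ∑ n ∈ Finset.range N, B n) fun x => ?_
  refine (norm_sum_le _ _).trans (Finset.sum_le_sum fun n _ => ?_)
  rw [norm_sub_rev]
  exact hB n x

lemma muLRP.exists_summable_lipschitz_approx [NormedSpace ℝ X] [NormedSpace ℝ Y] {μ : ℝ}
    (hLRP : muLRP X Y μ) {f : ℕ → X → Y} (hf : ∀ n, CoarseLipschitz (f n))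
    (hsum : ∑' n, lipInfty (f n) < ⊤) :
    ∃ (g : ℕ → X → Y) (K : ℕ → ℝ≥0), (∀ n, g n 0 = 0) ∧ (∀ n, LipschitzWith (K n) (g n)) ∧
      Summable K ∧ ∀ n, ∃ B : ℝ, ∀ x, ‖f n x - g n x‖ ≤ B := by
  set c : ℕ → ℝ := fun n => (lipInfty (f n)).toReal + (1 / 2) ^ n
  have hfc : ∀ n, lipInfty (f n) < ENNReal.ofReal (c n) := fun n => by
    rw [← ENNReal.ofReal_toReal (hf n).ne, ENNReal.ofReal_lt_ofReal_iff (by positivity)]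
    exact lt_add_of_pos_right _ (by positivity)
  choose g K hg₀ hg hKc hfg using fun n => hLRP (f n) (hf n) (c n) (hfc n)
  have hc : Summable c := (ENNReal.summable_toReal hsum.ne).add summable_geometric_two
  refine ⟨g, K, hg₀, hg, NNReal.summable_coe.1 ?_, hfg⟩
  exact (hc.mul_left μ).of_nonneg_of_le (fun n => (K n).coe_nonneg) fun n => (hKc n).le

end LipschitzRepresentation

theorem stmt6_general {X Y : Type*} [NormedAddCommGroup X] [NormedSpace ℝ X]
    [NormedAddCommGroup Y] [NormedSpace ℝ Y] [CompleteSpace Y]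
    (μ : ℝ) (hLRP : muLRP X Y μ)
    (f : ℕ → X → Y) (hf : ∀ n, CoarseLipschitz (f n))
    (hsum : ∑' n : ℕ, lipInfty (f n) < ⊤) :
    ∃ g : X → Y, CoarseLipschitz g ∧
      Tendsto (fun N : ℕ => lipInfty (fun x : X => g x - ∑ n ∈ Finset.range N, f n x))
        atTop (𝓝 0) := by
  obtain ⟨g, K, hg₀, hg, hK, hfg⟩ := hLRP.exists_summable_lipschitz_approx hf hsum
  have hle := lipInfty_tsum_sub_sum_le hg hK hg₀ hfg
  refine ⟨fun x => ∑' n, g n x, ?_, ?_⟩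
  · simpa [CoarseLipschitz] using (hle 0).trans_lt ENNReal.coe_lt_top
  · have htail : Tendsto (fun N => ((∑' n, K (n + N) : ℝ≥0) : ℝ≥0∞)) atTop (𝓝 0) := by
      simpa using ENNReal.tendsto_coe.2 (NNReal.tendsto_sum_nat_add K)
    exact tendsto_of_tendsto_of_tendsto_of_le_of_le tendsto_const_nhds htail
      (fun _ => zero_le) hle

/-- under the `μ`-LRP, `CL(X,Y)` is complete: every absolutely convergent
series of coarse Lipschitz maps converges in the `Lip_∞` (semi-)norm. -/
theorem stmt6 {X Y : Type*} [NormedAddCommGroup X] [NormedSpace ℝ X] [CompleteSpace X]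
    [NormedAddCommGroup Y] [NormedSpace ℝ Y] [CompleteSpace Y]
    (μ : ℝ) (hμ : 1 ≤ μ) (hLRP : muLRP X Y μ)
    (f : ℕ → X → Y) (hf : ∀ n, CoarseLipschitz (f n))
    (hsum : ∑' n : ℕ, lipInfty (f n) < ⊤) :
    ∃ g : X → Y, CoarseLipschitz g ∧
      Tendsto (fun N : ℕ => lipInfty (fun x : X => g x - ∑ n ∈ Finset.range N, f n x))
        atTop (𝓝 0) :=
  stmt6_general μ hLRP f hf hsum
end
end

section
/- Let X and Y be Banach spaces such that both (X,Y) and (Y,X) have the μ-Lipschitz representation property for some μ ≥ 1. Then for every coarse Lipschitz equivalence f: X → Y there exists ε > 0 such that for every map u: X → Y with Lip_∞(u) < ε, the map f − u is again a coarse Lipschitz equivalence from X to Y. -/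
/-!
The Lipschitz representation property replaces `f`, a coarse inverse `g` of it and the
perturbation `u` by Lipschitz maps `F`, `G`, `v` at bounded distance, where `Lip v` is as small
as `Lip_∞ u` allows. Since `G ∘ F` is close to the identity, `F - v` is close to
`(id - v ∘ G) ∘ F`. Once `Lip v · Lip G < 1`, the map `id - v ∘ G` is the identity of the Banach
space `Y` minus a contraction, so by the Banach fixed point theorem it has a Lipschitz inverse `T`.
Then `G ∘ T` is a Lipschitz coarse inverse of `F - v`, hence of `f - u`.
-/

open Metric Filter Topology Pointwise
open scoped ENNReal NNReal

noncomputable section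

section CoarseGeometry

variable {α β M N : Type*} [PseudoMetricSpace M] [PseudoMetricSpace N]

def Close (f g : α → N) : Prop := ∃ C : ℝ, ∀ x, dist (f x) (g x) ≤ C

namespace Close

variable {f g h : α → N}

theorem refl (f : α → N) : Close f f := ⟨0, fun x => (dist_self (f x)).le⟩

theorem symm (hfg : Close f g) : Close g f :=
  let ⟨C, hC⟩ := hfg; ⟨C, fun x => dist_comm (g x) (f x) ▸ hC x⟩

theorem trans (hfg : Close f g) (hgh : Close g h) : Close f h :=
  let ⟨C, hC⟩ := hfg; let ⟨D, hD⟩ := hgh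
  ⟨C + D, fun x => (dist_triangle _ (g x) _).trans (add_le_add (hC x) (hD x))⟩

theorem comp_right (hfg : Close f g) (k : β → α) : Close (f ∘ k) (g ∘ k) :=
  let ⟨C, hC⟩ := hfg; ⟨C, fun x => hC (k x)⟩

theorem of_norm_sub_le {E : Type*} [SeminormedAddCommGroup E] {f g : α → E} {B : ℝ}
    (h : ∀ x, ‖f x - g x‖ ≤ B) : Close f g :=
  ⟨B, fun x => (dist_eq_norm (f x) (g x)).trans_le (h x)⟩

theorem sub {E : Type*} [SeminormedAddCommGroup E] {f f' g g' : α → E}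
    (hf : Close f f') (hg : Close g g') : Close (f - g) (f' - g') :=
  let ⟨C, hC⟩ := hf; let ⟨D, hD⟩ := hg
  ⟨C + D, fun x => (dist_sub_sub_le _ _ _ _).trans (add_le_add (hC x) (hD x))⟩

theorem coarseLipschitz {f g : M → N} {K : ℝ≥0} (hfg : Close f g) (hg : LipschitzWith K g) :
    CoarseLipschitz f := by
  obtain ⟨C, hC⟩ := hfg
  have hlipS : lipS f 1 ≤ ENNReal.ofReal (K + 2 * C) := by
    refine iSup₂_le fun x y => iSup_le fun hxy => ENNReal.ofReal_le_ofReal ?_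
    rw [div_le_iff₀ (one_pos.trans_le hxy)]
    have hC0 : 0 ≤ C := dist_nonneg.trans (hC x)
    calc dist (f x) (f y) ≤ dist (f x) (g x) + dist (g x) (g y) + dist (g y) (f y) :=
          dist_triangle4 _ _ _ _
      _ ≤ C + K * dist x y + C := by
          gcongr
          · exact hC x
          · exact hg.dist_le_mul x y
          · exact dist_comm (g y) (f y) ▸ hC y
      _ ≤ (K + 2 * C) * dist x y := by nlinarith
  calc lipInfty f ≤ lipS f 1 := iInf₂_le 1 one_pos
    _ ≤ ENNReal.ofReal (K + 2 * C) := hlipS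
    _ < ⊤ := ENNReal.ofReal_lt_top

end Close

theorem LipschitzWith.comp_close {f g : α → M} {h : M → N} {K : ℝ≥0} (hh : LipschitzWith K h)
    (hfg : Close f g) : Close (h ∘ f) (h ∘ g) :=
  let ⟨C, hC⟩ := hfg
  ⟨K * C, fun x => (hh.dist_le_mul _ _).trans (by gcongr; exact hC x)⟩

theorem LipschitzWith.coarseLipschitz {f : M → N} {K : ℝ≥0} (hf : LipschitzWith K f) :
    CoarseLipschitz f :=
  (Close.refl f).coarseLipschitz hf

theorem Close.isCLEquiv {e p : M → N} {q : N → M} {Kp Kq : ℝ≥0} (hep : Close e p)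
    (hp : LipschitzWith Kp p) (hq : LipschitzWith Kq q) (hqp : Close (q ∘ p) id)
    (hpq : Close (p ∘ q) id) : IsCLEquiv e := by
  obtain ⟨C, hC⟩ := (hq.comp_close hep).trans hqp
  obtain ⟨D, hD⟩ := (hep.comp_right q).trans hpq
  exact ⟨hep.coarseLipschitz hp, q, hq.coarseLipschitz, max (max C D) 0, le_max_right _ _,
    fun x => (hC x).trans ((le_max_left _ _).trans (le_max_left _ _)),
    fun y => (hD y).trans ((le_max_right _ _).trans (le_max_left _ _))⟩

theorem IsCLEquiv.exists_close_comp {f : M → N} (hf : IsCLEquiv f) :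
    ∃ g : N → M, CoarseLipschitz g ∧ Close (g ∘ f) id ∧ Close (f ∘ g) id :=
  let ⟨_, g, hg, C, _, hgf, hfg⟩ := hf; ⟨g, hg, ⟨C, hgf⟩, ⟨C, hfg⟩⟩

end CoarseGeometry

theorem exists_lipschitz_inverse_id_sub {E : Type*} [NormedAddCommGroup E] [CompleteSpace E]
    {w : E → E} {K : ℝ≥0} (hw : LipschitzWith K w) (hK : K < 1) :
    ∃ (T : E → E) (L : ℝ≥0), LipschitzWith L T ∧
      Function.LeftInverse T (fun x => x - w x) ∧ Function.RightInverse T (fun x => x - w x) := by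
  have hanti : AntilipschitzWith (1 - K)⁻¹ (fun x => x - w x) := by
    simpa only [id, inv_one, Pi.neg_apply, sub_eq_add_neg] using
      AntilipschitzWith.id.add_lipschitzWith hw.neg (by rwa [inv_one])
  have hsurj : Function.Surjective (fun x => x - w x) := fun y => by
    have hc : ContractingWith K (fun x => y + w x) :=
      ⟨hK, LipschitzWith.of_dist_le_mul fun a b => by
        simpa only [dist_add_left] using hw.dist_le_mul a b⟩
    have : Nonempty E := ⟨y⟩
    refine ⟨ContractingWith.fixedPoint _ hc, ?_⟩
    exact sub_eq_iff_eq_add.2 (ContractingWith.fixedPoint_isFixedPt hc).symm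
  have hbij : Function.Bijective (fun x => x - w x) := ⟨hanti.injective, hsurj⟩
  exact ⟨Function.surjInv hsurj, _, hanti.to_rightInverse (Function.rightInverse_surjInv hsurj),
    Function.leftInverse_surjInv hbij, Function.rightInverse_surjInv hsurj⟩

theorem exists_lipschitz_coarseInverse_sub {X Y : Type*} [PseudoMetricSpace X]
    [NormedAddCommGroup Y] [CompleteSpace Y] {F v : X → Y} {G : Y → X} {Kv KG : ℝ≥0}
    (hv : LipschitzWith Kv v) (hG : LipschitzWith KG G) (hK : Kv * KG < 1)
    (hGF : Close (G ∘ F) id) (hFG : Close (F ∘ G) id) :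
    ∃ (q : Y → X) (L : ℝ≥0), LipschitzWith L q ∧ Close (q ∘ (F - v)) id ∧
      Close ((F - v) ∘ q) id := by
  obtain ⟨T, L, hT, hT_left, hT_right⟩ := exists_lipschitz_inverse_id_sub (hv.comp hG) hK
  refine ⟨G ∘ T, KG * L, hG.comp hT, ?_, ?_⟩
  · have hFv : Close (F - v) (fun x => F x - v (G (F x))) :=
      (Close.refl F).sub (hv.comp_close hGF.symm)
    have hGTF : (G ∘ T) ∘ (fun x => F x - v (G (F x))) = G ∘ F :=
      funext fun x => congrArg G (hT_left (F x))
    have hclose := (hG.comp hT).comp_close hFv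
    rw [hGTF] at hclose
    exact hclose.trans hGF
  · have hTid : id ∘ T - (v ∘ G) ∘ T = id := funext hT_right
    have hclose := (hFG.comp_right T).sub (Close.refl ((v ∘ G) ∘ T))
    rw [hTid] at hclose
    exact hclose

section LipschitzRepresentation

variable {X Y : Type*} [NormedAddCommGroup X] [NormedSpace ℝ X] [NormedAddCommGroup Y]
  [NormedSpace ℝ Y] {μ : ℝ}

theorem muLRP.exists_lipschitz_close (h : muLRP X Y μ) {f : X → Y} {c : ℝ}
    (hf : lipInfty f < ENNReal.ofReal c) :
    ∃ (F : X → Y) (K : ℝ≥0), LipschitzWith K F ∧ (K : ℝ) < μ * c ∧ Close f F :=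
  let ⟨F, K, _, hF, hK, _, hB⟩ := h f (hf.trans_le le_top) c hf
  ⟨F, K, hF, hK, Close.of_norm_sub_le hB⟩

theorem muLRP.exists_lipschitz_close_of_coarseLipschitz (h : muLRP X Y μ) {f : X → Y}
    (hf : CoarseLipschitz f) : ∃ (F : X → Y) (K : ℝ≥0), LipschitzWith K F ∧ Close f F :=
  let ⟨_, _, hc, _⟩ := ENNReal.lt_iff_exists_real_btwn.1 hf
  let ⟨F, K, hF, _, hfF⟩ := h.exists_lipschitz_close hc
  ⟨F, K, hF, hfF⟩

end LipschitzRepresentation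

theorem stmt7_general {X Y : Type*} [NormedAddCommGroup X] [NormedSpace ℝ X]
    [NormedAddCommGroup Y] [NormedSpace ℝ Y] [CompleteSpace Y]
    (μ : ℝ) (hμ : 1 ≤ μ) (hXY : muLRP X Y μ) (hYX : muLRP Y X μ)
    (f : X → Y) (hf : IsCLEquiv f) :
    ∃ ε : ℝ, 0 < ε ∧ ∀ u : X → Y, lipInfty u < ENNReal.ofReal ε →
      IsCLEquiv (fun x : X => f x - u x) := by
  obtain ⟨g, hg, hgf, hfg⟩ := hf.exists_close_comp
  obtain ⟨F, KF, hF, hfF⟩ := hXY.exists_lipschitz_close_of_coarseLipschitz hf.1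
  obtain ⟨G, KG, hG, hgG⟩ := hYX.exists_lipschitz_close_of_coarseLipschitz hg
  have hGF : Close (G ∘ F) id :=
    ((hG.comp_close hfF.symm).trans (hgG.symm.comp_right f)).trans hgf
  have hFG : Close (F ∘ G) id :=
    ((hF.comp_close hgG.symm).trans (hfF.symm.comp_right g)).trans hfg
  have hμ0 : 0 < μ := one_pos.trans_le hμ
  refine ⟨1 / (μ * (KG + 1)), by positivity, fun u hu => ?_⟩
  obtain ⟨v, Kv, hv, hKv, huv⟩ := hXY.exists_lipschitz_close hu
  have hK : Kv * KG < 1 := by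
    have hμε : μ * (1 / (μ * (KG + 1))) = 1 / (KG + 1) := by field_simp
    rw [hμε, lt_div_iff₀ (by positivity)] at hKv
    rw [← NNReal.coe_lt_coe, NNReal.coe_mul, NNReal.coe_one]
    nlinarith [Kv.coe_nonneg]
  obtain ⟨q, L, hq, hqp, hpq⟩ := exists_lipschitz_coarseInverse_sub hv hG hK hGF hFG
  exact (hfF.sub huv).isCLEquiv (hF.sub hv) hq hqp hpq

/-- under the `μ`-LRP on both sides, coarse Lipschitz equivalences are
stable under perturbation by maps of small `Lip_∞` norm. -/
theorem stmt7 {X Y : Type*} [NormedAddCommGroup X] [NormedSpace ℝ X] [CompleteSpace X]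
    [NormedAddCommGroup Y] [NormedSpace ℝ Y] [CompleteSpace Y]
    (μ : ℝ) (hμ : 1 ≤ μ) (hXY : muLRP X Y μ) (hYX : muLRP Y X μ)
    (f : X → Y) (hf : IsCLEquiv f) :
    ∃ ε : ℝ, 0 < ε ∧ ∀ u : X → Y, lipInfty u < ENNReal.ofReal ε →
      IsCLEquiv (fun x : X => f x - u x) :=
  stmt7_general μ hμ hXY hYX f hf
end
end

section
/- There exist infinite-dimensional Banach spaces X and Y, a coarse Lipschitz map f: X → Y with Lip_∞(f) > 0, and ε > 0, such that every coarse Lipschitz map g: X → Y with Lip_∞(f − g) < ε does not attain its norm in any direction y ∈ S_Y. (In the paper's formulation: there exists a pair of Banach spaces (X,Y) such that the norm attaining coarse Lipschitz maps are not dense in CL(X,Y).) -/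
open Metric Filter Topology Pointwise
open scoped ENNReal NNReal

noncomputable section

/-- `f` attains its norm `Lip_∞(f)` in the direction `y`. -/
def AttainsNorm {X Y : Type*} [NormedAddCommGroup X] [NormedSpace ℝ X]
    [NormedAddCommGroup Y] [NormedSpace ℝ Y] (f : X → Y) (y : Y) : Prop :=
  ∃ s t : ℕ → X, (∀ n, s n ≠ t n) ∧
    Tendsto (fun n => ‖s n - t n‖) atTop atTop ∧
    Tendsto (fun n => (‖s n - t n‖)⁻¹ • (f (t n) - f (s n))) atTop
      (𝓝 ((lipInfty f).toReal • y))

/-!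
Take `X = Y = c₀` and `f x = F ‖x‖`, where the `k`-th coordinate of `F r` is the length of
`[2^k, 2^(k+1)] ∩ [0, r]`. Then `F` is `1`-Lipschitz and `F (2^(k+1)) - F (2^k) = 2^k e_k`, so
`Lip_∞ f = 1`, while every coordinate of `f` is bounded. If `Lip_∞ (f - g) < ε`, the large-scale
difference quotients of `g` are `ε`-close to those of `f`, whose coordinates tend to `0`.
Hence any limit `Lip_∞(g) • y` of such quotients has all coordinates, and so its norm, at most `ε`;
but `Lip_∞ g ≥ 1 - ε`, which is impossible for `ε < 1/2`.
-/

open scoped ZeroAtInfty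

section CoarseLipschitzConstant

variable {M N : Type*} [PseudoMetricSpace M] [PseudoMetricSpace N]

theorem le_lipS (f : M → N) {s : ℝ} {x y : M} (h : s ≤ dist x y) :
    ENNReal.ofReal (dist (f x) (f y) / dist x y) ≤ lipS f s :=
  le_iSup₂_of_le x y <| le_iSup_of_le h le_rfl

theorem lipS_antitone (f : M → N) : Antitone (lipS f) := fun _ _ hst =>
  iSup₂_le fun _ _ => iSup_le fun h => le_lipS f (hst.trans h)

theorem lipS_le_of_lipschitzWith {f : M → N} {K : ℝ≥0} (hf : LipschitzWith K f) (s : ℝ) :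
    lipS f s ≤ K :=
  iSup₂_le fun x y => iSup_le fun _ => by
    rw [← ENNReal.ofReal_coe_nnreal]
    exact ENNReal.ofReal_le_ofReal <|
      div_le_of_le_mul₀ dist_nonneg K.coe_nonneg (hf.dist_le_mul x y)

theorem lipInfty_le_lipS (f : M → N) {s : ℝ} (hs : 0 < s) : lipInfty f ≤ lipS f s :=
  iInf₂_le s hs

theorem le_lipInfty {f : M → N} {C : ℝ≥0∞} (h : ∀ s : ℝ, 0 < s → C ≤ lipS f s) :
    C ≤ lipInfty f :=
  le_iInf₂ h

theorem exists_dist_le_of_lipInfty_lt {f : M → N} {ε : ℝ} (hf : lipInfty f < ENNReal.ofReal ε) :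
    ∃ s > 0, ∀ x y, s ≤ dist x y → dist (f x) (f y) ≤ ε * dist x y := by
  obtain ⟨s, hs⟩ := iInf_lt_iff.1 hf
  obtain ⟨hs₀, hlt⟩ := iInf_lt_iff.1 hs
  refine ⟨s, hs₀, fun x y hxy => ?_⟩
  have hq := ((le_lipS f hxy).trans_lt hlt)
  rw [ENNReal.ofReal_lt_ofReal_iff'] at hq
  exact ((div_lt_iff₀ (hs₀.trans_le hxy)).1 hq.1).le

theorem lipS_le_add {E : Type*} [SeminormedAddCommGroup E] (f g : M → E) (s : ℝ) :
    lipS f s ≤ lipS g s + lipS (fun x => f x - g x) s := by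
  refine iSup₂_le fun x y => iSup_le fun hxy => ?_
  have hfg : dist (f x) (f y) ≤ dist (g x) (g y) + dist (f x - g x) (f y - g y) := by
    simpa only [dist_eq_norm, sub_sub_sub_comm, add_sub_cancel]
      using norm_add_le (g x - g y) ((f x - g x) - (f y - g y))
  calc ENNReal.ofReal (dist (f x) (f y) / dist x y)
      ≤ ENNReal.ofReal (dist (g x) (g y) / dist x y)
          + ENNReal.ofReal (dist (f x - g x) (f y - g y) / dist x y) := by
        rw [← ENNReal.ofReal_add (by positivity) (by positivity), ← add_div]
        gcongr
    _ ≤ lipS g s + lipS (fun x => f x - g x) s :=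
        add_le_add (le_lipS g hxy) (le_lipS (fun x => f x - g x) hxy)

theorem lipInfty_le_add {E : Type*} [SeminormedAddCommGroup E] (f g : M → E) :
    lipInfty f ≤ lipInfty g + lipInfty (fun x => f x - g x) :=
  ENNReal.le_iInf₂_add_iInf₂ fun s hs t _ =>
    calc lipInfty f ≤ lipS f (max s t) := lipInfty_le_lipS f (lt_max_of_lt_left hs)
      _ ≤ lipS g (max s t) + lipS (fun x => f x - g x) (max s t) := lipS_le_add f g _
      _ ≤ lipS g s + lipS (fun x => f x - g x) t :=
        add_le_add (lipS_antitone g (le_max_left s t)) (lipS_antitone _ (le_max_right s t))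

end CoarseLipschitzConstant

namespace ZeroAtInftyContinuousMap

section Norm

variable {α β : Type*} [TopologicalSpace α] [SeminormedAddCommGroup β]

theorem norm_apply_le_norm (f : C₀(α, β)) (x : α) : ‖f x‖ ≤ ‖f‖ :=
  (f.toBCF.norm_coe_le_norm x).trans_eq norm_toBCF_eq_norm

theorem norm_le_iff {f : C₀(α, β)} {C : ℝ} (hC : 0 ≤ C) : ‖f‖ ≤ C ↔ ∀ x, ‖f x‖ ≤ C := by
  rw [← norm_toBCF_eq_norm, BoundedContinuousFunction.norm_le hC]
  rfl

end Norm

def ofEventuallyZero {β : Type*} [TopologicalSpace β] [Zero β] (u : ℕ → β)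
    (hu : ∀ᶠ k in atTop, u k = 0) : C₀(ℕ, β) where
  toFun := u
  continuous_toFun := continuous_of_discreteTopology
  zero_at_infty' := by
    rw [cocompact_eq_cofinite, Nat.cofinite_eq_atTop]
    exact tendsto_const_nhds.congr' (hu.mono fun _ hk => hk.symm)

@[simp]
theorem coe_ofEventuallyZero {β : Type*} [TopologicalSpace β] [Zero β] (u : ℕ → β)
    (hu : ∀ᶠ k in atTop, u k = 0) : ⇑(ofEventuallyZero u hu) = u :=
  rfl

theorem not_finiteDimensional_nat_real : ¬ FiniteDimensional ℝ C₀(ℕ, ℝ) := by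
  intro _
  let δ (j : ℕ) : C₀(ℕ, ℝ) := ofEventuallyZero (Pi.single j 1) <| by
    filter_upwards [eventually_gt_atTop j] with k hk
    exact Pi.single_eq_of_ne hk.ne' 1
  let coeLinear : C₀(ℕ, ℝ) →ₗ[ℝ] ℕ → ℝ :=
    { toFun := (⇑), map_add' := fun _ _ => rfl, map_smul' := fun _ _ => rfl }
  have hδ : LinearIndependent ℝ δ := .of_comp coeLinear (Pi.linearIndependent_single_one ℕ ℝ)
  have := hδ.finite
  exact not_finite ℕ

theorem norm_le_of_tendsto {w : ℕ → C₀(ℕ, ℝ)} {q : C₀(ℕ, ℝ)} (hw : Tendsto w atTop (𝓝 q))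
    {ε : ℝ} (hε : 0 ≤ ε)
    (h : ∀ k, ∃ b : ℕ → ℝ, Tendsto b atTop (𝓝 0) ∧ ∀ᶠ n in atTop, |w n k| ≤ ε + b n) :
    ‖q‖ ≤ ε := by
  refine (norm_le_iff hε).2 fun k => ?_
  obtain ⟨b, hb, hwb⟩ := h k
  have hwk : Tendsto (fun n => w n k) atTop (𝓝 (q k)) :=
    ((BoundedContinuousFunction.evalCLM ℝ k).continuous.comp isometry_toBCF.continuous
      |>.tendsto q).comp hw
  simpa using le_of_tendsto_of_tendsto hwk.abs (by simpa using hb.const_add ε) hwb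

end ZeroAtInftyContinuousMap

open ZeroAtInftyContinuousMap

theorem AttainsNorm.norm_smul_le_of_lipInfty_sub_lt {X : Type*} [NormedAddCommGroup X]
    [NormedSpace ℝ X] {f g : X → C₀(ℕ, ℝ)} {y : C₀(ℕ, ℝ)} {ε : ℝ} (hg : AttainsNorm g y)
    (hf : ∀ k, ∃ C, ∀ x, |f x k| ≤ C) (hfg : lipInfty (fun x => f x - g x) < ENNReal.ofReal ε) :
    ‖(lipInfty g).toReal • y‖ ≤ ε := by
  obtain ⟨s, t, -, hdist, hlim⟩ := hg
  obtain ⟨s₀, hs₀, hclose⟩ := exists_dist_le_of_lipInfty_lt hfg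
  have hε : 0 < ε := ENNReal.ofReal_pos.1 (pos_of_gt hfg)
  refine norm_le_of_tendsto hlim hε.le fun k => ?_
  obtain ⟨C, hC⟩ := hf k
  refine ⟨fun n => 2 * C / ‖s n - t n‖, tendsto_const_nhds.div_atTop hdist, ?_⟩
  filter_upwards [hdist.eventually_ge_atTop s₀] with n hn
  set d := ‖s n - t n‖
  have hd : 0 < d := hs₀.trans_le hn
  have hsplit : g (t n) k - g (s n) k =
      (f (t n) k - f (s n) k) - ((f (t n) - g (t n)) - (f (s n) - g (s n))) k := by
    simp only [coe_sub, Pi.sub_apply]; ring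
  have hclose' := hclose (t n) (s n) (by rwa [dist_eq_norm, norm_sub_rev])
  rw [dist_eq_norm, dist_eq_norm, norm_sub_rev (t n)] at hclose'
  have hgk : |g (t n) k - g (s n) k| ≤ (C + C) + ε * d := by
    rw [hsplit]
    refine (abs_sub _ _).trans (add_le_add ((abs_sub _ _).trans (add_le_add (hC _) (hC _))) ?_)
    exact (norm_apply_le_norm _ k).trans hclose'
  rw [coe_smul, coe_sub, Pi.smul_apply, Pi.sub_apply, smul_eq_mul, abs_mul, abs_inv,
    abs_of_pos hd]
  calc d⁻¹ * |g (t n) k - g (s n) k| ≤ d⁻¹ * ((C + C) + ε * d) := by gcongr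
    _ = ε + 2 * C / d := by field_simp; ring

/-- The length of `[2^k, 2^(k+1)] ∩ [0, r]`. -/
def dyadicRamp (k : ℕ) (r : ℝ) : ℝ := min (max (r - 2 ^ k) 0) (2 ^ k)

theorem abs_dyadicRamp_le (k : ℕ) (r : ℝ) : |dyadicRamp k r| ≤ 2 ^ k :=
  (abs_of_nonneg (le_min (le_max_right _ _) (by positivity))).trans_le (min_le_right _ _)

theorem dyadicRamp_of_le {k : ℕ} {r : ℝ} (h : r ≤ 2 ^ k) : dyadicRamp k r = 0 := by
  rw [dyadicRamp, max_eq_right (by linarith), min_eq_left (by positivity)]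

theorem dyadicRamp_two_pow_succ (k : ℕ) : dyadicRamp k (2 ^ (k + 1)) = 2 ^ k := by
  rw [dyadicRamp, pow_succ, mul_two, add_sub_cancel_right, max_eq_left (by positivity), min_self]

theorem lipschitzWith_dyadicRamp (k : ℕ) : LipschitzWith 1 (dyadicRamp k) :=
  ((IsometryEquiv.subRight (2 ^ k : ℝ)).isometry.lipschitz.max_const 0).min_const _

def dyadicPath (r : ℝ) : C₀(ℕ, ℝ) :=
  ofEventuallyZero (fun k => dyadicRamp k r) <| by
    obtain ⟨m, hm⟩ := pow_unbounded_of_one_lt r one_lt_two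
    filter_upwards [eventually_ge_atTop m] with k hk
    exact dyadicRamp_of_le (hm.le.trans (pow_le_pow_right₀ one_le_two hk))

@[simp]
theorem dyadicPath_apply (r : ℝ) (k : ℕ) : dyadicPath r k = dyadicRamp k r :=
  rfl

theorem lipschitzWith_dyadicPath : LipschitzWith 1 dyadicPath :=
  LipschitzWith.of_dist_le_mul fun a b => by
    rw [NNReal.coe_one, one_mul, dist_eq_norm, norm_le_iff dist_nonneg]
    intro k
    simpa [Real.dist_eq] using (lipschitzWith_dyadicRamp k).dist_le_mul a b

theorem lipInfty_dyadicPath_norm {X : Type*} [NormedAddCommGroup X] [NormedSpace ℝ X]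
    [Nontrivial X] : lipInfty (fun x : X => dyadicPath ‖x‖) = 1 := by
  refine le_antisymm ((lipInfty_le_lipS _ one_pos).trans ?_) (le_lipInfty fun s _ => ?_)
  · have hlip := lipschitzWith_dyadicPath.comp (lipschitzWith_one_norm (E := X))
    exact (lipS_le_of_lipschitzWith hlip 1).trans (by simp)
  obtain ⟨k, hk⟩ := pow_unbounded_of_one_lt s one_lt_two
  obtain ⟨u, hu⟩ := exists_norm_eq X zero_le_one
  have hnorm (c : ℝ) (hc : 0 ≤ c) : ‖c • u‖ = c := by
    rw [norm_smul, hu, mul_one, Real.norm_of_nonneg hc]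
  set x : X := (2 : ℝ) ^ (k + 1) • u
  set y : X := (2 : ℝ) ^ k • u
  have hxy : dist x y = 2 ^ k := by
    rw [dist_eq_norm, ← sub_smul, pow_succ, mul_two, add_sub_cancel_right, hnorm _ (by positivity)]
  have hfxy : 2 ^ k ≤ dist (dyadicPath ‖x‖) (dyadicPath ‖y‖) := by
    rw [dist_eq_norm]
    refine le_trans (le_of_eq ?_) (norm_apply_le_norm _ k)
    rw [hnorm _ (by positivity), hnorm _ (by positivity), coe_sub, Pi.sub_apply,
      dyadicPath_apply, dyadicPath_apply, dyadicRamp_two_pow_succ, dyadicRamp_of_le le_rfl,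
      sub_zero, Real.norm_of_nonneg (by positivity)]
  calc (1 : ℝ≥0∞) = ENNReal.ofReal (2 ^ k / 2 ^ k) := by rw [div_self (by positivity)]; simp
    _ ≤ ENNReal.ofReal (dist (dyadicPath ‖x‖) (dyadicPath ‖y‖) / dist x y) := by
        rw [hxy]; gcongr
    _ ≤ lipS _ s := le_lipS _ (hxy ▸ hk.le)

/-- there is a pair of Banach spaces `(X,Y)` for which the norm
attaining coarse Lipschitz maps are not dense in `CL(X,Y)`. -/
theorem stmt19 :
    ∃ (X : Type) (_ : NormedAddCommGroup X) (_ : NormedSpace ℝ X) (_ : CompleteSpace X)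
      (Y : Type) (_ : NormedAddCommGroup Y) (_ : NormedSpace ℝ Y) (_ : CompleteSpace Y),
      ¬ FiniteDimensional ℝ X ∧ ¬ FiniteDimensional ℝ Y ∧
      ∃ (f : X → Y) (ε : ℝ), CoarseLipschitz f ∧ 0 < lipInfty f ∧ 0 < ε ∧
        ∀ g : X → Y, CoarseLipschitz g →
          lipInfty (fun x : X => f x - g x) < ENNReal.ofReal ε →
          ∀ y : Y, ‖y‖ = 1 → ¬ AttainsNorm g y := by
  have : Nontrivial C₀(ℕ, ℝ) :=
    not_subsingleton_iff_nontrivial.1 fun _ => not_finiteDimensional_nat_real inferInstance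
  have hf : lipInfty (fun x : C₀(ℕ, ℝ) => dyadicPath ‖x‖) = 1 := lipInfty_dyadicPath_norm
  refine ⟨C₀(ℕ, ℝ), inferInstance, inferInstance, inferInstance, C₀(ℕ, ℝ), inferInstance,
    inferInstance, inferInstance, not_finiteDimensional_nat_real, not_finiteDimensional_nat_real,
    fun x => dyadicPath ‖x‖, 1 / 4, by simp [CoarseLipschitz, hf], by simp [hf], by norm_num, ?_⟩
  intro g hg hfg y hy hattains
  have hlower : 1 ≤ (lipInfty g).toReal + 1 / 4 := by
    have h := ENNReal.toReal_mono (ENNReal.add_ne_top.2 ⟨hg.ne, ENNReal.ofReal_ne_top⟩)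
      ((lipInfty_le_add (fun x => dyadicPath ‖x‖) g).trans (add_le_add le_rfl hfg.le))
    rwa [hf, ENNReal.toReal_add hg.ne ENNReal.ofReal_ne_top, ENNReal.toReal_ofReal (by norm_num),
      ENNReal.toReal_one] at h
  have hupper := hattains.norm_smul_le_of_lipInfty_sub_lt (f := fun x => dyadicPath ‖x‖)
    (fun k => ⟨2 ^ k, fun x => abs_dyadicRamp_le k ‖x‖⟩) hfg
  rw [norm_smul, hy, mul_one, Real.norm_of_nonneg ENNReal.toReal_nonneg] at hupper
  linarith
end
end
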